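/- For the ECA rule 162, with local rule h(a,b,c) = (a ∨ ¬b) ∧ c, and for every n ≥ 2: if τ and τ' form a special pair (i.e. lab_τ ≠ lab_τ' but f^{(τ)} = f^{(τ')}), then lab_τ((i+1,i)) = lab_τ'((i+1,i)) for every cell i ∈ ℤ/nℤ. -/

import Mathlib

/-- One round of a block-sequential update: all cells of rank `k` are updated
simultaneously by the ECA local rule `h`, reading the current states. -/
def ecaStep (n : ℕ) (h : Bool → Bool → Bool → Bool) (τ : ZMod n → ℕ) (k : ℕ)
    (x : ZMod n → Bool) : ZMod n → Bool :=
  fun i => if τ i = k then h (x (i - 1)) (x i) (x (i + 1)) else x i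

/-- State after processing ranks `0, 1, …, k` in increasing order. -/
def ecaUpTo (n : ℕ) (h : Bool → Bool → Bool → Bool) (τ : ZMod n → ℕ) :
    ℕ → (ZMod n → Bool) → ZMod n → Bool
  | 0 => ecaStep n h τ 0
  | k + 1 => fun x => ecaStep n h τ (k + 1) (ecaUpTo n h τ k x)

/-- Asynchronous global function `f^{(τ)}` for the block-sequential update
schedule `τ : ZMod n → ℕ` (rank of each cell): a cell keeps the value it gets
in the round where it is updated (it is never updated again afterwards). -/
def ecaAsync (n : ℕ) (h : Bool → Bool → Bool → Bool) (τ : ZMod n → ℕ)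
    (x : ZMod n → Bool) : ZMod n → Bool :=
  fun i => ecaUpTo n h τ (τ i) x i

/-- Synchronous global function of the ECA with local rule `h`. -/
def ecaSync (n : ℕ) (h : Bool → Bool → Bool → Bool) (x : ZMod n → Bool) :
    ZMod n → Bool :=
  fun i => h (x (i - 1)) (x i) (x (i + 1))

/-- Label of the arc `(i, j)` for schedule `τ`:
`true` = ⊕ (τ i ≥ τ j), `false` = ⊖ (τ i < τ j). -/
def lab (n : ℕ) (τ : ZMod n → ℕ) (i j : ZMod n) : Bool :=
  decide (τ j ≤ τ i)

/- Proof idea: run the schedule on the configuration that is `true` everywhere except at `i`.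
Rule 162 copies the right neighbour into a `false` cell, so cell `i` ends up with the value its
right neighbour has when `i` is updated. That value is still `true` unless `i + 1` was updated
strictly earlier, in which case rule 162 has turned it `false` (its left neighbour `i` is still
`false`). Hence `f^{(τ)}(x)_i` is the label `lab_τ (i + 1, i)`, and so `f^{(τ)}` determines it. -/

section BlockSequential

variable {n : ℕ} {h : Bool → Bool → Bool → Bool} {τ : ZMod n → ℕ} {x : ZMod n → Bool}

theorem ecaUpTo_apply (k : ℕ) (j : ZMod n) :
    ecaUpTo n h τ k x j = if τ j ≤ k then ecaAsync n h τ x j else x j := by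
  induction k with
  | zero =>
    by_cases hj : τ j = 0 <;> simp [ecaAsync, ecaUpTo, ecaStep, hj]
  | succ k ih =>
    rcases lt_trichotomy (τ j) (k + 1) with hlt | heq | hgt
    · simp only [ecaUpTo, ecaStep, hlt.ne, if_false, ih, Nat.lt_succ_iff.mp hlt, hlt.le, if_true]
    · simp [ecaAsync, heq]
    · simp only [ecaUpTo, ecaStep, hgt.ne', if_false, ih, not_le.mpr hgt,
        not_le.mpr (Nat.lt_of_succ_lt hgt)]

theorem ecaAsync_apply (i : ZMod n) :
    ecaAsync n h τ x i =
      h (if τ (i - 1) < τ i then ecaAsync n h τ x (i - 1) else x (i - 1)) (x i)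
        (if τ (i + 1) < τ i then ecaAsync n h τ x (i + 1) else x (i + 1)) := by
  rcases Nat.eq_zero_or_pos (τ i) with h0 | hpos
  · simp [ecaAsync, ecaUpTo, ecaStep, h0]
  · obtain ⟨m, hm⟩ : ∃ m, τ i = m + 1 := ⟨τ i - 1, by omega⟩
    conv_lhs => rw [ecaAsync, hm]
    simp only [ecaUpTo, ecaStep, ecaUpTo_apply, ← Nat.lt_add_one_iff, ← hm, lt_irrefl,
      if_false, if_true]

end BlockSequential

theorem ecaAsync_apply_of_isolated_false {n : ℕ} {h : Bool → Bool → Bool → Bool}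
    (h_copy : ∀ a c, h a false c = c) (h_kill : ∀ c, h false true c = false)
    (τ : ZMod n → ℕ) {i : ZMod n} (hi : i + 1 ≠ i) :
    ecaAsync n h τ (fun j => decide (j ≠ i)) i = lab n τ (i + 1) i := by
  rw [ecaAsync_apply, decide_eq_false (not_not.mpr rfl), h_copy, lab]
  by_cases hlt : τ (i + 1) < τ i
  · have h_next : ecaAsync n h τ (fun j => decide (j ≠ i)) (i + 1) = false := by
      rw [ecaAsync_apply, add_sub_cancel_right, if_neg (lt_asymm hlt),
        decide_eq_false (not_not.mpr rfl), decide_eq_true hi, h_kill]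
    rw [if_pos hlt, h_next, decide_eq_false (not_le.mpr hlt)]
  · simp [hlt, hi, not_lt.mp hlt]

theorem rule_162_special_pair_counterclockwise_general (n : ℕ) (hn : 2 ≤ n)
    (τ τ' : ZMod n → ℕ)
    (heq : ecaAsync n (fun a b c => (a || !b) && c) τ =
      ecaAsync n (fun a b c => (a || !b) && c) τ') :
    ∀ i : ZMod n, lab n τ (i + 1) i = lab n τ' (i + 1) i := by
  intro i
  have : Fact (1 < n) := ⟨hn⟩
  have hi : i + 1 ≠ i := by simp
  have h162 := ecaAsync_apply_of_isolated_false (n := n) (h := fun a b c => (a || !b) && c)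
    (by decide) (by decide)
  rw [← h162 τ hi, ← h162 τ' hi, heq]

/-- Rule 162 (h a b c = (a ∨ ¬b) ∧ c): schedules of a special pair agree on
the labels of all arcs $(i+1,i)$. -/
theorem rule_162_special_pair_counterclockwise (n : ℕ) (hn : 2 ≤ n)
    (τ τ' : ZMod n → ℕ)
    (hne : ∃ j k : ZMod n, (k = j + 1 ∨ k = j - 1) ∧ lab n τ j k ≠ lab n τ' j k)
    (heq : ecaAsync n (fun a b c => (a || !b) && c) τ =
      ecaAsync n (fun a b c => (a || !b) && c) τ') :
    ∀ i : ZMod n, lab n τ (i + 1) i = lab n τ' (i + 1) i :=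
  rule_162_special_pair_counterclockwise_general n hn τ τ' heq
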